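/- Let K be a finite field with card(K) = m + 1. In the Laurent polynomial ring K[x, x^{-1}] with its standard Z-grading, the ideal I generated by 1 + x^m is invariant under the gauge action (τ_t(1 + x^m) = 1 + x^m for all t ∈ K*), but I is not a graded ideal. -/

import Mathlib

open LaurentPolynomial

/-- The gauge action of `t ∈ Kˣ` on Laurent polynomials: the coefficient of `x ^ n` is
multiplied by `t ^ n`. -/
noncomputable def laurentGauge {K : Type*} [Field K] (t : Kˣ) (p : LaurentPolynomial K) :
    LaurentPolynomial K :=
  p.coeff.sum fun n c => LaurentPolynomial.C (c * ((t ^ n : Kˣ) : K)) * LaurentPolynomial.T n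

/-! The gauge action fixes `1 + x ^ m` because `t ^ m = 1` for every `t ∈ K*` when
`m = card K - 1`. The ideal `(1 + x ^ m)` is proper, since `1 + x ^ m` vanishes at an `m`-th root
of `-1` in an algebraic closure, yet its degree-zero component is `1`; so it is not graded. -/

namespace LaurentPolynomial

theorem not_isUnit_one_add_T {R : Type*} [CommRing R] [Nontrivial R] {n : ℕ} (hn : n ≠ 0) :
    ¬ IsUnit (1 + T n : R[T;T⁻¹]) := by
  obtain ⟨M, hM⟩ := Ideal.exists_maximal R
  let := Ideal.Quotient.field M
  obtain ⟨z, hz⟩ :=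
    IsAlgClosed.exists_pow_nat_eq (-1 : AlgebraicClosure (R ⧸ M)) (Nat.pos_of_ne_zero hn)
  have hz0 : z ≠ 0 := by
    rintro rfl
    simp [zero_pow hn] at hz
  intro hunit
  have := hunit.map <|
    eval₂ ((algebraMap _ (AlgebraicClosure (R ⧸ M))).comp (Ideal.Quotient.mk M)) (Units.mk0 z hz0)
  simp [hz] at this

end LaurentPolynomial

section Gauge

variable {K : Type*} [Field K] (t : Kˣ)

theorem laurentGauge_add (p q : K[T;T⁻¹]) :
    laurentGauge t (p + q) = laurentGauge t p + laurentGauge t q :=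
  Finsupp.sum_add_index' (by simp) (by simp [add_mul])

theorem laurentGauge_T (n : ℤ) : laurentGauge t (T n) = C ((t ^ n : Kˣ) : K) * T n := by
  rw [laurentGauge, T, AddMonoidAlgebra.coeff_single, Finsupp.sum_single_index (by simp), one_mul]
  rfl

theorem laurentGauge_one : laurentGauge t (1 : K[T;T⁻¹]) = 1 := by
  simpa using laurentGauge_T t 0

end Gauge

theorem FiniteField.units_pow_card_sub_one_eq_one {K : Type*} [Field K] [Fintype K] (t : Kˣ) :
    t ^ (Fintype.card K - 1) = 1 := by
  classical
  rw [← Fintype.card_units]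
  exact pow_card_eq_one

/-- For a finite field `K` with `card K = m + 1`, in `K[x, x⁻¹]` the ideal
generated by `1 + x ^ m` is gauge-invariant (indeed `τ_t (1 + x^m) = 1 + x^m` for all
`t ∈ K*`), but it is not a graded ideal. -/
theorem laurent_gauge_invariant_not_graded (K : Type*) [Field K] [Fintype K] (m : ℕ)
    (hcard : Fintype.card K = m + 1) :
    (∀ t : Kˣ, laurentGauge t (1 + LaurentPolynomial.T (m : ℤ)) =
        1 + LaurentPolynomial.T (m : ℤ)) ∧
    ¬ (∀ p ∈ Ideal.span {(1 + LaurentPolynomial.T (m : ℤ) : LaurentPolynomial K)},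
        ∀ n : ℤ, LaurentPolynomial.C (p.coeff n) * LaurentPolynomial.T n ∈
          Ideal.span {(1 + LaurentPolynomial.T (m : ℤ) : LaurentPolynomial K)}) := by
  have hpow : ∀ t : Kˣ, t ^ m = 1 := fun t => by
    simpa [hcard] using FiniteField.units_pow_card_sub_one_eq_one t
  refine ⟨fun t => ?_, fun hgraded => ?_⟩
  · rw [laurentGauge_add, laurentGauge_one, laurentGauge_T, zpow_natCast, hpow, Units.val_one,
      map_one, one_mul]
  have hm : m ≠ 0 := by
    have := Fintype.one_lt_card (α := K)
    omega
  have hcoeff : (1 + T (m : ℤ) : K[T;T⁻¹]).coeff 0 = 1 := by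
    change (Finsupp.single 0 1 + Finsupp.single (m : ℤ) 1 : ℤ →₀ K) 0 = 1
    simp [hm]
  have hone := hgraded _ (Ideal.mem_span_singleton_self _) 0
  rw [hcoeff, map_one, T_zero, one_mul, Ideal.mem_span_singleton] at hone
  exact not_isUnit_one_add_T hm (isUnit_of_dvd_one hone)
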